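/- Let Δ₁, Δ₂, Δ₃ be three closed upward unit equilateral triangles in the plane that all share a single common vertex Q and pairwise intersect exactly in {Q} (e.g. Δ(i,j), Δ(i−1,j), Δ(i,j−1) around the grid point Q = P(i,j) for i, j ≥ 1). Then there do not exist three unit segments e₁, e₂, e₃ forming a path (e₁ and e₂ share an endpoint, e₂ and e₃ share an endpoint, and the three segments are pairwise distinct) together with a bijection assigning each segment e_m to one of the three triangles so that e_m is a side of its assigned triangle. In other words, the three-tiles-around-a-node configuration is traversable by a Hamiltonian path of centroids but not by a tiling path. -/
import Mathlib


/-- The unit vector in direction `d·π/3`, viewing the plane as `ℂ`. -/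
noncomputable def dirU (d : Fin 6) : ℂ :=
  Complex.exp ((d : ℕ) * Real.pi / 3 * Complex.I)

/-- The position sequence of a direction word: `p₀ = 0`, `p_{m+1} = p_m + dirU (ds_m)`. -/
noncomputable def posSeq (ds : List (Fin 6)) (m : ℕ) : ℂ :=
  ((ds.take m).map dirU).sum

/-- The closed upward unit triangle with base point `A`: the convex hull of
`A`, `A + u(0)`, `A + u(1)`. -/
noncomputable def upTri (A : ℂ) : Set ℂ :=
  convexHull ℝ {A, A + dirU 0, A + dirU 1}

/-- `e` is a side (one of the three closed edges) of the upward unit triangle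
with base point `A`. -/
def IsSideOfUp (e : Set ℂ) (A : ℂ) : Prop :=
  e = segment ℝ A (A + dirU 0) ∨
  e = segment ℝ (A + dirU 0) (A + dirU 1) ∨
  e = segment ℝ A (A + dirU 1)

lemma side_subset_upTri {e : Set ℂ} {A : ℂ} (h : IsSideOfUp e A) : e ⊆ upTri A := by
  rcases h with h | h | h <;> subst h <;>
    refine (convex_convexHull ℝ _).segment_subset ?_ ?_ <;>
    apply subset_convexHull <;> simp

lemma side_ne_singleton {A q : ℂ} (h : IsSideOfUp {q} A) : False := by
  have h0 : dirU 0 ≠ 0 := Complex.exp_ne_zero _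
  have h1 : dirU 1 ≠ 0 := Complex.exp_ne_zero _
  rcases h with h | h | h
  · have hA : A ∈ ({q} : Set ℂ) := h ▸ left_mem_segment ℝ _ _
    have hB : A + dirU 0 ∈ ({q} : Set ℂ) := h ▸ right_mem_segment ℝ _ _
    simp only [Set.mem_singleton_iff] at hA hB
    exact h0 (by linear_combination hB - hA)
  · have hA : A + dirU 0 ∈ ({q} : Set ℂ) := h ▸ left_mem_segment ℝ _ _
    have hB : A + dirU 1 ∈ ({q} : Set ℂ) := h ▸ right_mem_segment ℝ _ _
    simp only [Set.mem_singleton_iff] at hA hB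
    have heq : dirU 1 = dirU 0 := by linear_combination hB - hA
    have hd0 : dirU 0 = 1 := by simp [dirU]
    have him : (dirU 1).im = Real.sin (Real.pi / 3) := by
      simp [dirU, Complex.exp_im]
    have hpos : 0 < Real.sin (Real.pi / 3) :=
      Real.sin_pos_of_pos_of_lt_pi (by positivity) (by linarith [Real.pi_pos])
    rw [heq, hd0] at him
    simp only [Complex.one_im] at him
    linarith
  · have hA : A ∈ ({q} : Set ℂ) := h ▸ left_mem_segment ℝ _ _
    have hB : A + dirU 1 ∈ ({q} : Set ℂ) := h ▸ right_mem_segment ℝ _ _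
    simp only [Set.mem_singleton_iff] at hA hB
    exact h1 (by linear_combination hB - hA)

/-- Three closed upward unit triangles sharing a single common vertex `Q`
and pairwise intersecting exactly in `{Q}` cannot be traversed by a tiling path: there are
no three pairwise distinct unit segments forming a path (consecutive ones sharing an
endpoint) together with a bijection assigning each segment to one of the three triangles
as one of its sides. -/
theorem no_tiling_path_of_three_tiles_around_node (A : Fin 3 → ℂ) (Q : ℂ)
    (hvertex : ∀ m, Q = A m ∨ Q = A m + dirU 0 ∨ Q = A m + dirU 1)
    (hmeet : ∀ m m', m ≠ m' → upTri (A m) ∩ upTri (A m') = {Q}) :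
    ¬ ∃ (x : Fin 4 → ℂ) (π : Equiv.Perm (Fin 3)),
        (∀ m : Fin 3,
          IsSideOfUp (segment ℝ (x m.castSucc) (x m.succ)) (A (π m))) ∧
        (∀ m m' : Fin 3, m ≠ m' →
          segment ℝ (x m.castSucc) (x m.succ) ≠ segment ℝ (x m'.castSucc) (x m'.succ)) := by
  rintro ⟨x, π, hside, -⟩
  have hseg : ∀ m : Fin 3, segment ℝ (x m.castSucc) (x m.succ) ⊆ upTri (A (π m)) :=
    fun m => side_subset_upTri (hside m)
  have key : ∀ m m' : Fin 3, m ≠ m' → ∀ z,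
      z ∈ segment ℝ (x m.castSucc) (x m.succ) →
      z ∈ segment ℝ (x m'.castSucc) (x m'.succ) → z = Q := by
    intro m m' hmm z hz hz'
    have : z ∈ upTri (A (π m)) ∩ upTri (A (π m')) := ⟨hseg m hz, hseg m' hz'⟩
    rw [hmeet _ _ (fun h => hmm (π.injective h))] at this
    exact this
  have e01 : (0 : Fin 3).succ = (1 : Fin 3).castSucc := by decide
  have e12 : (1 : Fin 3).succ = (2 : Fin 3).castSucc := by decide
  have h1 : x ((1 : Fin 3).castSucc) = Q := by
    apply key 0 1 (by decide)
    · rw [← e01]; exact right_mem_segment ℝ _ _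
    · exact left_mem_segment ℝ _ _
  have h2 : x ((1 : Fin 3).succ) = Q := by
    apply key 1 2 (by decide)
    · exact right_mem_segment ℝ _ _
    · rw [e12]; exact left_mem_segment ℝ _ _
  have := hside 1
  rw [h1, h2, segment_same] at this
  exact side_ne_singleton this
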